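/- Let D ⊂ ℝ^d be a bounded open set, and let V : ℝ^d → ℝ be continuous with V(x) ≥ 0 on D. Let λ > 0, let u : ℝ^d → ℝ be twice continuously differentiable on D, continuous on the closure of D, vanishing on the boundary ∂D, satisfying −Δu + V u = λ u in D and normalized by sup_{x ∈ D} |u(x)| ≤ 1, and let ψ : ℝ^d → ℝ be twice continuously differentiable on D, continuous on the closure of D, vanishing on ∂D, and satisfying the landscape equation −Δψ + V ψ = 1 in D. Then the pointwise bound |u(x)| ≤ λ · ψ(x) holds for every x ∈ D (in particular ψ ≥ 0 on D). -/

import Mathlib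

/-!
Minimum principle for `-Δ + V` with `V ≥ 0`: if `w ≥ 0` on `∂D` and `(-Δ + V) w > 0` in `D`, then
`w ≥ 0` in `D`, since at a negative interior minimum both `-Δw ≤ 0` and `Vw ≤ 0`. For `|σ| < 1`
this applies to `w = λψ - σu`, because `(-Δ + V)(λψ - σu) = λ(1 - σu) > 0`; letting `σ → ±1`
gives `|u| ≤ λψ`. Thus `ψ` itself plays the role of the usual strict barrier.
-/

/-- The Laplacian `Δw(x) = ∑_{i=1}^d ∂²w/∂x_i²(x)` of `w : ℝ^d → ℝ`, expressed via
iterated (total) Fréchet derivatives in the coordinate directions. -/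
noncomputable def lapl (d : ℕ) (w : (Fin d → ℝ) → ℝ) (x : Fin d → ℝ) : ℝ :=
  ∑ i, fderiv ℝ (fun y => fderiv ℝ w y (Pi.single i 1)) x (Pi.single i 1)

open Filter Topology Set

theorem le_of_forall_mem_Ioo_mul_le {a b : ℝ} (h : ∀ σ ∈ Ioo (0 : ℝ) 1, σ * a ≤ b) : a ≤ b := by
  have hlim : Tendsto (fun σ : ℝ => σ * a) (𝓝[<] 1) (𝓝 a) := by
    simpa using ((tendsto_id (x := 𝓝 (1 : ℝ))).mul_const a).mono_left nhdsWithin_le_nhds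
  exact le_of_tendsto hlim (eventually_of_mem (Ioo_mem_nhdsLT one_pos) h)

theorem IsLocalMin.deriv_deriv_nonneg {f : ℝ → ℝ} {a : ℝ} (h : IsLocalMin f a)
    (hf : ContinuousAt f a) : 0 ≤ deriv (deriv f) a := by
  by_contra! hneg
  have hconst : f =ᶠ[𝓝 a] fun _ => f a :=
    (h.and (isLocalMax_of_deriv_deriv_neg hneg h.deriv_eq_zero hf)).mono
      fun _ hx => le_antisymm hx.2 hx.1
  have : deriv (deriv f) a = 0 := by
    rw [hconst.deriv.deriv_eq]
    simp
  exact hneg.ne this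

section SecondDirectionalDerivative

variable {E F : Type*} [NormedAddCommGroup E] [NormedSpace ℝ E]
  [NormedAddCommGroup F] [NormedSpace ℝ F]

theorem ContDiffAt.differentiableAt_fderiv_apply {f : E → F} {x : E} (hf : ContDiffAt ℝ 2 f x)
    (v : E) : DifferentiableAt ℝ (fun y => fderiv ℝ f y v) x :=
  ((hf.fderiv_right (m := 1) le_rfl).differentiableAt one_ne_zero).clm_apply
    (differentiableAt_const v)

theorem fderiv_fderiv_apply_add {f g : E → F} {x : E} (hf : ContDiffAt ℝ 2 f x)
    (hg : ContDiffAt ℝ 2 g x) (v w : E) :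
    fderiv ℝ (fun y => fderiv ℝ (fun z => f z + g z) y v) x w =
      fderiv ℝ (fun y => fderiv ℝ f y v) x w + fderiv ℝ (fun y => fderiv ℝ g y v) x w := by
  have hsum : (fun y => fderiv ℝ (fun z => f z + g z) y v)
      =ᶠ[𝓝 x] fun y => fderiv ℝ f y v + fderiv ℝ g y v := by
    filter_upwards [hf.eventually (by simp), hg.eventually (by simp)] with y hfy hgy
    rw [fderiv_fun_add (hfy.differentiableAt two_ne_zero) (hgy.differentiableAt two_ne_zero)]
    rfl
  rw [hsum.fderiv_eq, fderiv_fun_add (hf.differentiableAt_fderiv_apply v)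
    (hg.differentiableAt_fderiv_apply v)]
  rfl

theorem fderiv_fderiv_apply_const_smul (c : ℝ) (f : E → F) (x v w : E) :
    fderiv ℝ (fun y => fderiv ℝ (fun z => c • f z) y v) x w =
      c • fderiv ℝ (fun y => fderiv ℝ f y v) x w := by
  have hinner : (fun y => fderiv ℝ (fun z => c • f z) y v) = c • fun y => fderiv ℝ f y v := by
    ext y
    exact congrArg (fun L : E →L[ℝ] F => L v) (congrFun (fderiv_const_smul_field (f := f) c) y)
  rw [hinner, fderiv_const_smul_field]
  rfl

theorem IsLocalMin.fderiv_fderiv_apply_nonneg {f : E → ℝ} {p : E} (h : IsLocalMin f p)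
    (hf : ContDiffAt ℝ 2 f p) (v : E) : 0 ≤ fderiv ℝ (fun y => fderiv ℝ f y v) p v := by
  let line : ℝ → E := fun t => p + t • v
  have hline : ∀ t, HasDerivAt line v t := fun t =>
    .const_add p (by simpa using (hasDerivAt_id t).smul_const v)
  have hline0 : line 0 = p := by simp [line]
  have hcont : ContinuousAt line 0 := (hline 0).continuousAt
  rw [← hline0] at h hf ⊢
  have hderiv : deriv (f ∘ line) =ᶠ[𝓝 0] fun t => fderiv ℝ f (line t) v := by
    filter_upwards [hcont.eventually (hf.eventually (by simp))] with t ht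
    exact ((ht.differentiableAt two_ne_zero).hasFDerivAt.comp_hasDerivAt t (hline t)).deriv
  have hsecond : HasDerivAt (fun t => fderiv ℝ f (line t) v)
      (fderiv ℝ (fun y => fderiv ℝ f y v) (line 0) v) 0 :=
    (hf.differentiableAt_fderiv_apply v).hasFDerivAt.comp_hasDerivAt 0 (hline 0)
  rw [← hsecond.deriv, ← hderiv.deriv_eq]
  exact (h.comp_continuous hcont).deriv_deriv_nonneg (hf.continuousAt.comp hcont)

end SecondDirectionalDerivative

section Laplacian

variable {d : ℕ}

theorem lapl_add {f g : (Fin d → ℝ) → ℝ} {x : Fin d → ℝ} (hf : ContDiffAt ℝ 2 f x)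
    (hg : ContDiffAt ℝ 2 g x) : lapl d (fun y => f y + g y) x = lapl d f x + lapl d g x := by
  simp only [lapl, fderiv_fderiv_apply_add hf hg, Finset.sum_add_distrib]

theorem lapl_const_mul (c : ℝ) (f : (Fin d → ℝ) → ℝ) (x : Fin d → ℝ) :
    lapl d (fun y => c * f y) x = c * lapl d f x := by
  simp only [lapl, ← smul_eq_mul, fderiv_fderiv_apply_const_smul, Finset.smul_sum]

theorem IsLocalMin.lapl_nonneg {w : (Fin d → ℝ) → ℝ} {p : Fin d → ℝ} (h : IsLocalMin w p)
    (hw : ContDiffAt ℝ 2 w p) : 0 ≤ lapl d w p :=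
  Finset.sum_nonneg fun _ _ => h.fderiv_fderiv_apply_nonneg hw _

theorem nonneg_of_neg_lapl_add_mul_pos {D : Set (Fin d → ℝ)} (hDo : IsOpen D)
    (hDb : Bornology.IsBounded D) {V : (Fin d → ℝ) → ℝ} (hV : ∀ x ∈ D, 0 ≤ V x)
    {w : (Fin d → ℝ) → ℝ} (hw : ContDiffOn ℝ 2 w D) (hwc : ContinuousOn w (closure D))
    (hwb : ∀ x ∈ frontier D, 0 ≤ w x) (hLw : ∀ x ∈ D, 0 < -lapl d w x + V x * w x) :
    ∀ x ∈ closure D, 0 ≤ w x := by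
  intro x hx
  obtain ⟨p, hp, hmin⟩ := hDb.isCompact_closure.exists_isMinOn ⟨x, hx⟩ hwc
  suffices 0 ≤ w p from this.trans (hmin hx)
  by_contra! hneg
  have hpD : p ∈ D := by
    rw [closure_eq_self_union_frontier] at hp
    exact hp.resolve_right fun hpf => hneg.not_ge (hwb p hpf)
  have hloc : IsLocalMin w p :=
    hmin.isLocalMin (mem_of_superset (hDo.mem_nhds hpD) subset_closure)
  have hlapl := hloc.lapl_nonneg (hw.contDiffAt (hDo.mem_nhds hpD))
  nlinarith [hLw p hpD, mul_nonpos_of_nonneg_of_nonpos (hV p hpD) hneg.le]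

end Laplacian

theorem landscape_pointwise_bound_general
    (d : ℕ) (D : Set (Fin d → ℝ)) (hDo : IsOpen D) (hDb : Bornology.IsBounded D)
    (V : (Fin d → ℝ) → ℝ) (hVpos : ∀ x ∈ D, 0 ≤ V x)
    (lam : ℝ) (hlam : 0 < lam)
    (u ψ : (Fin d → ℝ) → ℝ)
    (hu2 : ContDiffOn ℝ 2 u D) (huc : ContinuousOn u (closure D))
    (hub : ∀ x ∈ frontier D, u x = 0)
    (hupde : ∀ x ∈ D, -lapl d u x + V x * u x = lam * u x)
    (hunorm : ∀ x ∈ D, |u x| ≤ 1)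
    (hψ2 : ContDiffOn ℝ 2 ψ D) (hψc : ContinuousOn ψ (closure D))
    (hψb : ∀ x ∈ frontier D, ψ x = 0)
    (hψpde : ∀ x ∈ D, -lapl d ψ x + V x * ψ x = 1) :
    ∀ x ∈ D, |u x| ≤ lam * ψ x ∧ 0 ≤ ψ x := by
  have hdominated : ∀ σ ∈ Ioo (-1 : ℝ) 1, ∀ x ∈ D, σ * u x ≤ lam * ψ x := by
    intro σ hσ
    have hsupersolution : ∀ y ∈ D, 0 < -lapl d (fun y => lam * ψ y + -σ * u y) y +
        V y * (lam * ψ y + -σ * u y) := by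
      intro y hy
      have hsmall : |σ * u y| < 1 := by
        rw [abs_mul]
        exact (mul_le_of_le_one_right (abs_nonneg σ) (hunorm y hy)).trans_lt (abs_lt.mpr hσ)
      have hD := hDo.mem_nhds hy
      rw [lapl_add (contDiffAt_const.mul (hψ2.contDiffAt hD))
        (contDiffAt_const.mul (hu2.contDiffAt hD)), lapl_const_mul, lapl_const_mul]
      calc 0 < lam * (1 - σ * u y) := mul_pos hlam (by linarith [(abs_lt.mp hsmall).2])
        _ = _ := by linear_combination σ * hupde y hy - lam * hψpde y hy
    have hw := nonneg_of_neg_lapl_add_mul_pos hDo hDb hVpos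
      ((contDiffOn_const.mul hψ2).add (contDiffOn_const.mul hu2))
      ((continuousOn_const.mul hψc).add (continuousOn_const.mul huc))
      (fun y hy => by simp [hψb y hy, hub y hy]) hsupersolution
    intro x hx
    linarith [hw x (subset_closure hx)]
  intro x hx
  have hbound : |u x| ≤ lam * ψ x := abs_le'.mpr
    ⟨le_of_forall_mem_Ioo_mul_le fun σ hσ =>
        hdominated σ ⟨by linarith [hσ.1], hσ.2⟩ x hx,
      le_of_forall_mem_Ioo_mul_le fun σ hσ => by
        simpa using hdominated (-σ) ⟨by linarith [hσ.2], by linarith [hσ.1]⟩ x hx⟩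
  exact ⟨hbound, (mul_nonneg_iff_of_pos_left hlam).mp ((abs_nonneg _).trans hbound)⟩

/-- Filoche–Mayboroda landscape bound: on a bounded open set `D` with continuous
potential `V ≥ 0`, a classical eigenfunction `u` (eigenvalue `λ > 0`, vanishing on
`∂D`, `sup_D |u| ≤ 1`) is pointwise dominated by `λ` times the landscape function `ψ`
solving `−Δψ + Vψ = 1` with zero boundary values; in particular `ψ ≥ 0` on `D`. -/
theorem landscape_pointwise_bound
    (d : ℕ) (D : Set (Fin d → ℝ)) (hDo : IsOpen D) (hDb : Bornology.IsBounded D)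
    (V : (Fin d → ℝ) → ℝ) (hV : Continuous V) (hVpos : ∀ x ∈ D, 0 ≤ V x)
    (lam : ℝ) (hlam : 0 < lam)
    (u ψ : (Fin d → ℝ) → ℝ)
    (hu2 : ContDiffOn ℝ 2 u D) (huc : ContinuousOn u (closure D))
    (hub : ∀ x ∈ frontier D, u x = 0)
    (hupde : ∀ x ∈ D, -lapl d u x + V x * u x = lam * u x)
    (hunorm : ∀ x ∈ D, |u x| ≤ 1)
    (hψ2 : ContDiffOn ℝ 2 ψ D) (hψc : ContinuousOn ψ (closure D))
    (hψb : ∀ x ∈ frontier D, ψ x = 0)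
    (hψpde : ∀ x ∈ D, -lapl d ψ x + V x * ψ x = 1) :
    ∀ x ∈ D, |u x| ≤ lam * ψ x ∧ 0 ≤ ψ x :=
  landscape_pointwise_bound_general d D hDo hDb V hVpos lam hlam u ψ hu2 huc hub hupde hunorm hψ2
    hψc hψb hψpde
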